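/- arXiv:math/0210113 — 6 statements merged into one kernel-verified Lean document; each statement's English description precedes it below -/
import Mathlib

section
/- Let n be a natural number with n ≥ 3, let h be an n-cycle in the symmetric group on Fin n, let a ∈ Fin n, and let i, j be natural numbers with 0 < i < j < n. Set b = (h^i) a and c = (h^j) a (so that a, b, c occur in this clockwise cyclic order along h). Then the product h * σ, where σ is the 3-cycle sending a ↦ b ↦ c ↦ a and fixing all other points, is again an n-cycle (a cycle whose support is all of Fin n). -/
/-- Let `h` be an `n`-cycle on `Fin n` with `n ≥ 3`, let `a : Fin n`, and let
`0 < i < j < n`. Set `b = (h^i) a` and `c = (h^j) a`, so `a, b, c` occur in this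
clockwise cyclic order along `h`. Then `h * σ`, where `σ` is the 3-cycle
`a ↦ b ↦ c ↦ a` (i.e. `Equiv.swap a b * Equiv.swap b c`), is again an `n`-cycle. -/
theorem stmt_1 (n : ℕ) (hn : 3 ≤ n) (h : Equiv.Perm (Fin n))
    (hc : h.IsCycle) (hs : h.support = Finset.univ)
    (a : Fin n) (i j : ℕ) (hi : 0 < i) (hij : i < j) (hjn : j < n)
    (b c : Fin n) (hb : b = (h ^ i) a) (hcc : c = (h ^ j) a) :
    (h * (Equiv.swap a b * Equiv.swap b c)).IsCycle ∧
      (h * (Equiv.swap a b * Equiv.swap b c)).support = Finset.univ := by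
  set σ : Equiv.Perm (Fin n) := Equiv.swap a b * Equiv.swap b c with hσ
  set g : Equiv.Perm (Fin n) := h * σ with hg
  have hmove : ∀ x : Fin n, h x ≠ x := fun x =>
    Equiv.Perm.mem_support.mp (hs ▸ Finset.mem_univ x)
  have horder : orderOf h = n := by
    rw [hc.orderOf, hs, Finset.card_univ, Fintype.card_fin]
  have hpow_ne : ∀ (m : ℕ) (x : Fin n), 0 < m → m < n → (h ^ m) x ≠ x := by
    intro m x hm hmn hfix
    have h1 : h ^ m = 1 := hc.pow_eq_one_iff.mpr ⟨x, hmove x, hfix⟩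
    have h2 := orderOf_dvd_of_pow_eq_one h1
    rw [horder] at h2
    exact absurd (Nat.le_of_dvd hm h2) (not_le.mpr hmn)
  have hinj : ∀ p q : ℕ, p < n → q < n → (h ^ p) a = (h ^ q) a → p = q := by
    have key : ∀ p q : ℕ, p < q → q < n → (h ^ p) a = (h ^ q) a → False := by
      intro p q hpq hqn heq
      have : (h ^ (q - p)) ((h ^ p) a) = (h ^ p) a := by
        rw [← Equiv.Perm.mul_apply, ← pow_add, Nat.sub_add_cancel hpq.le, ← heq]
      exact hpow_ne (q - p) _ (by omega) (by omega) this
    intro p q hp hq heq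
    by_contra hne
    rcases Nat.lt_or_ge p q with hlt | hge
    · exact key p q hlt hq heq
    · exact key q p (by omega) hp heq.symm
  have hab : a ≠ b := fun e => by
    have := hinj 0 i (by omega) (by omega)
      (by simp only [pow_zero, Equiv.Perm.one_apply, ← hb]; exact e)
    omega
  have hac : a ≠ c := fun e => by
    have := hinj 0 j (by omega) (by omega)
      (by simp only [pow_zero, Equiv.Perm.one_apply, ← hcc]; exact e)
    omega
  have hbc : b ≠ c := fun e => by
    have := hinj i j (by omega) (by omega) (by rw [← hb, ← hcc, e])
    omega
  have hσa : σ a = b := by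
    rw [hσ, Equiv.Perm.mul_apply, Equiv.swap_apply_of_ne_of_ne hab hac,
      Equiv.swap_apply_left]
  have hσb : σ b = c := by
    rw [hσ, Equiv.Perm.mul_apply, Equiv.swap_apply_left,
      Equiv.swap_apply_of_ne_of_ne hac.symm hbc.symm]
  have hσfix : ∀ x : Fin n, x ≠ a → x ≠ b → x ≠ c → σ x = x := by
    intro x hxa hxb hxc
    rw [hσ, Equiv.Perm.mul_apply, Equiv.swap_apply_of_ne_of_ne hxb hxc,
      Equiv.swap_apply_of_ne_of_ne hxa hxb]
  have hidx : ∀ m : ℕ, m < n → m ≠ 0 → m ≠ i → m ≠ j →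
      (h ^ m) a ≠ a ∧ (h ^ m) a ≠ b ∧ (h ^ m) a ≠ c := by
    intro m hm h0 hi' hj'
    refine ⟨fun e => h0 (hinj m 0 hm (by omega) (by simpa using e)),
      fun e => hi' (hinj m i hm (by omega) (by rw [e, hb])),
      fun e => hj' (hinj m j hm (by omega) (by rw [e, hcc]))⟩
  have hstep : ∀ m : ℕ, m < n → m ≠ 0 → m ≠ i → m ≠ j →
      g ((h ^ m) a) = (h ^ (m + 1)) a := by
    intro m hm h0 hi' hj'
    obtain ⟨e1, e2, e3⟩ := hidx m hm h0 hi' hj'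
    rw [hg, Equiv.Perm.mul_apply, hσfix _ e1 e2 e3, pow_succ' h m,
      Equiv.Perm.mul_apply]
  -- segment A : indices 1 .. i
  have hA : ∀ t : ℕ, t < i → (g ^ t) (h a) = (h ^ (t + 1)) a := by
    intro t
    induction t with
    | zero => intro _; simp
    | succ t ih =>
      intro ht
      rw [pow_succ', Equiv.Perm.mul_apply, ih (by omega),
        hstep (t + 1) (by omega) (by omega) (by omega) (by omega)]
  -- segment B : indices j+1 .. n (i.e. back to a)
  have hB : ∀ t : ℕ, t ≤ n - 1 - j → (g ^ (i + t)) (h a) = (h ^ (j + 1 + t)) a := by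
    intro t
    induction t with
    | zero =>
      intro _
      obtain ⟨i', rfl⟩ : ∃ i', i = i' + 1 := ⟨i - 1, by omega⟩
      rw [Nat.add_zero, pow_succ', Equiv.Perm.mul_apply, hA i' (by omega),
        hg, Equiv.Perm.mul_apply, ← hb, hσb, hcc, ← Equiv.Perm.mul_apply,
        ← pow_succ']
    | succ t ih =>
      intro ht
      rw [← Nat.add_assoc, pow_succ', Equiv.Perm.mul_apply, ih (by omega),
        hstep (j + 1 + t) (by omega) (by omega) (by omega) (by omega)]
      ring_nf
  have hn1 : h ^ n = 1 := by
    have := pow_orderOf_eq_one h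
    rwa [horder] at this
  have hBa : (g ^ (i + (n - 1 - j))) (h a) = a := by
    have hb' := hB (n - 1 - j) le_rfl
    rw [show j + 1 + (n - 1 - j) = n by omega, hn1] at hb'
    simpa using hb'
  -- segment C : indices i+1 .. j
  have hC : ∀ t : ℕ, t ≤ j - (i + 1) →
      (g ^ (i + (n - 1 - j) + 1 + t)) (h a) = (h ^ (i + 1 + t)) a := by
    intro t
    induction t with
    | zero =>
      intro _
      rw [Nat.add_zero, pow_succ', Equiv.Perm.mul_apply, hBa, hg,
        Equiv.Perm.mul_apply, hσa, hb, ← Equiv.Perm.mul_apply, ← pow_succ']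
    | succ t ih =>
      intro ht
      rw [← Nat.add_assoc, pow_succ', Equiv.Perm.mul_apply, ih (by omega),
        hstep (i + 1 + t) (by omega) (by omega) (by omega) (by omega)]
      ring_nf
  -- orbit of `h a` under `g` is everything
  have key : ∀ y : Fin n, ∃ t : ℕ, (g ^ t) (h a) = y := by
    intro y
    obtain ⟨m, hm, hmy⟩ := (hc.sameCycle (hmove a) (hmove y)).exists_pow_eq'
    rw [horder] at hm
    rcases Nat.eq_zero_or_pos m with rfl | hm0
    · exact ⟨i + (n - 1 - j), by rw [hBa]; simpa using hmy⟩
    rcases Nat.lt_or_ge m (i + 1) with hmi | hmi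
    · refine ⟨m - 1, ?_⟩
      rw [hA (m - 1) (by omega)]
      have : m - 1 + 1 = m := by omega
      rw [this, hmy]
    rcases Nat.lt_or_ge m (j + 1) with hmj | hmj
    · refine ⟨i + (n - 1 - j) + 1 + (m - (i + 1)), ?_⟩
      rw [hC (m - (i + 1)) (by omega)]
      have : i + 1 + (m - (i + 1)) = m := by omega
      rw [this, hmy]
    · refine ⟨i + (m - (j + 1)), ?_⟩
      rw [hB (m - (j + 1)) (by omega)]
      have : j + 1 + (m - (j + 1)) = m := by omega
      rw [this, hmy]
  -- wrap up
  have hgx : g (h a) ≠ h a := by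
    intro he
    have fixall : ∀ t : ℕ, (g ^ t) (h a) = h a := by
      intro t
      induction t with
      | zero => simp
      | succ t ih => rw [pow_succ', Equiv.Perm.mul_apply, ih, he]
    obtain ⟨y, hy⟩ := Fintype.exists_ne_of_one_lt_card (by simp; omega) (h a)
    obtain ⟨t, ht⟩ := key y
    rw [fixall t] at ht
    exact hy ht.symm
  have hmoveg : ∀ y : Fin n, g y ≠ y := by
    intro y he
    obtain ⟨t, ht⟩ := key y
    apply hgx
    have : (g ^ t) (g (h a)) = (g ^ t) (h a) := by
      rw [← Equiv.Perm.mul_apply, ← pow_succ, pow_succ', Equiv.Perm.mul_apply, ht]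
      exact he
    exact (g ^ t).injective this
  constructor
  · refine ⟨h a, hgx, fun y hy => ?_⟩
    obtain ⟨t, ht⟩ := key y
    exact ⟨(t : ℤ), by simpa using ht⟩
  · ext y
    simp [Equiv.Perm.mem_support, hmoveg y]
end

section
/- Let n be a natural number with n ≥ 4, let h be an n-cycle in the symmetric group on Fin n, let a ∈ Fin n, and let i, j, k be natural numbers with 0 < i < j < k < n. Set c = (h^i) a, b = (h^j) a, and d = (h^k) a (so that a, c, b, d occur in this interlaced clockwise cyclic order along h). Then the product h * (Equiv.swap a b * Equiv.swap c d) is again an n-cycle (a cycle whose support is all of Fin n). -/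
open Equiv Equiv.Perm

/-- Let `h` be an `n`-cycle on `Fin n` with `n ≥ 4`, let `a : Fin n`, and let
`0 < i < j < k < n`. Set `c = (h^i) a`, `b = (h^j) a`, `d = (h^k) a`, so that
`a, c, b, d` occur in this interlaced clockwise cyclic order along `h`. Then
`h * (swap a b * swap c d)` is again an `n`-cycle. -/
theorem stmt_2 (n : ℕ) (hn : 4 ≤ n) (h : Equiv.Perm (Fin n))
    (hcyc : h.IsCycle) (hsupp : h.support = Finset.univ)
    (a : Fin n) (i j k : ℕ) (hi : 0 < i) (hij : i < j) (hjk : j < k) (hkn : k < n)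
    (b c d : Fin n) (hc : c = (h ^ i) a) (hb : b = (h ^ j) a) (hd : d = (h ^ k) a) :
    (h * (Equiv.swap a b * Equiv.swap c d)).IsCycle ∧
      (h * (Equiv.swap a b * Equiv.swap c d)).support = Finset.univ := by
  subst hb hc hd
  set g := h * (Equiv.swap a ((h ^ j) a) * Equiv.swap ((h ^ i) a) ((h ^ k) a)) with hg
  set P : ℕ → Fin n := fun m => (h ^ m) a with hP
  have ha : h a ≠ a := Equiv.Perm.mem_support.mp (hsupp ▸ Finset.mem_univ a)
  have hord : orderOf h = n := by
    rw [hcyc.orderOf, hsupp, Finset.card_univ, Fintype.card_fin]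
  -- injectivity of P mod n
  have hdvd : ∀ m : ℕ, P m = a → n ∣ m := fun m hm => by
    have := (hcyc.pow_eq_one_iff' ha).mpr hm
    have := orderOf_dvd_of_pow_eq_one this
    rwa [hord] at this
  have hinj : ∀ m m' : ℕ, m ≤ m' → m' < m + n → P m = P m' → m = m' := by
    intro m m' hle hlt he
    have : P (m' - m) = a := by
      have : (h ^ m) ((h ^ (m' - m)) a) = (h ^ m) a := by
        rw [← Equiv.Perm.mul_apply, ← pow_add, Nat.add_sub_cancel' hle]
        exact he.symm
      exact (Equiv.injective _) this
    have := hdvd _ this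
    have h1 : m' - m < n := by omega
    have := Nat.eq_zero_of_dvd_of_lt this h1 |>.symm
    omega
  have Pne : ∀ m m' : ℕ, m < n → m' < n → m ≠ m' → P m ≠ P m' := by
    intro m m' hm hm' hne he
    rcases Nat.lt_or_ge m m' with hlt | hge
    · exact hne (hinj m m' hlt.le (by omega) he)
    · exact hne (hinj m' m (by omega) (by omega) he.symm).symm
  have hin : i < n := by omega
  have hjn : j < n := by omega
  have Pne' : ∀ m m' : ℕ, m < n → m' < n → m ≠ m' → (h ^ m) a ≠ (h ^ m') a := Pne
  have hane : ∀ m : ℕ, 0 < m → m < n → a ≠ (h ^ m) a := by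
    intro m h0 hm
    simpa using Pne' 0 m (by omega) hm (by omega)
  have hps : ∀ m : ℕ, h ((h ^ m) a) = (h ^ (m + 1)) a := by
    intro m
    rw [← Equiv.Perm.mul_apply, ← pow_succ']
  -- action of g on powers
  have gP : ∀ m : ℕ, m < n → m ≠ 0 → m ≠ i → m ≠ j → m ≠ k → g (P m) = P (m + 1) := by
    intro m hm h0 hi' hj' hk'
    show h (Equiv.swap a ((h ^ j) a) (Equiv.swap ((h ^ i) a) ((h ^ k) a) ((h ^ m) a)))
      = (h ^ (m + 1)) a
    rw [Equiv.swap_apply_of_ne_of_ne (Pne' m i hm hin hi') (Pne' m k hm hkn hk'),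
      Equiv.swap_apply_of_ne_of_ne ((hane m (by omega) hm).symm) (Pne' m j hm hjn hj'), hps]
  have g0 : g a = P (j + 1) := by
    show h (Equiv.swap a ((h ^ j) a) (Equiv.swap ((h ^ i) a) ((h ^ k) a) a)) = (h ^ (j + 1)) a
    rw [Equiv.swap_apply_of_ne_of_ne (hane i hi hin) (hane k (by omega) hkn),
      Equiv.swap_apply_left, hps]
  have gi' : g (P i) = P (k + 1) := by
    show h (Equiv.swap a ((h ^ j) a) (Equiv.swap ((h ^ i) a) ((h ^ k) a) ((h ^ i) a)))
      = (h ^ (k + 1)) a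
    rw [Equiv.swap_apply_left,
      Equiv.swap_apply_of_ne_of_ne ((hane k (by omega) hkn).symm)
        (Pne' k j hkn hjn (by omega)), hps]
  have gj' : g (P j) = P 1 := by
    show h (Equiv.swap a ((h ^ j) a) (Equiv.swap ((h ^ i) a) ((h ^ k) a) ((h ^ j) a)))
      = (h ^ 1) a
    rw [Equiv.swap_apply_of_ne_of_ne (Pne' j i hjn hin (by omega)) (Pne' j k hjn hkn (by omega)),
      Equiv.swap_apply_right, pow_one]
  have gk' : g (P k) = P (i + 1) := by
    show h (Equiv.swap a ((h ^ j) a) (Equiv.swap ((h ^ i) a) ((h ^ k) a) ((h ^ k) a)))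
      = (h ^ (i + 1)) a
    rw [Equiv.swap_apply_right,
      Equiv.swap_apply_of_ne_of_ne ((hane i hi hin).symm) (Pne' i j hin hjn (by omega)), hps]
  -- chain lemma
  have chain : ∀ s t : ℕ, s ≤ t → (∀ m, s ≤ m → m < t → g (P m) = P (m + 1)) →
      g.SameCycle (P s) (P t) := by
    intro s t hst hstep
    induction t, hst using Nat.le_induction with
    | base => exact Equiv.Perm.SameCycle.refl g (P s)
    | succ t hst ih =>
      have h1 : g.SameCycle (P s) (P t) := ih (fun m hm hm' => hstep m hm (by omega))
      have h2 : g (P t) = P (t + 1) := hstep t hst (by omega)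
      exact h1.trans ⟨1, by simpa using h2⟩
  -- reach every power
  have SCjk : ∀ t : ℕ, j + 1 ≤ t → t ≤ k → g.SameCycle a (P t) := by
    intro t h1 h2
    refine Equiv.Perm.SameCycle.trans ⟨1, by simpa using g0⟩ (chain (j + 1) t h1 ?_)
    intro m hm hm'
    exact gP m (by omega) (by omega) (by omega) (by omega) (by omega)
  have SCij : ∀ t : ℕ, i + 1 ≤ t → t ≤ j → g.SameCycle a (P t) := by
    intro t h1 h2
    refine Equiv.Perm.SameCycle.trans ((SCjk k (by omega) le_rfl).trans ⟨1, by simpa using gk'⟩)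
      (chain (i + 1) t h1 ?_)
    intro m hm hm'
    exact gP m (by omega) (by omega) (by omega) (by omega) (by omega)
  have SC1i : ∀ t : ℕ, 1 ≤ t → t ≤ i → g.SameCycle a (P t) := by
    intro t h1 h2
    refine Equiv.Perm.SameCycle.trans ((SCij j (by omega) le_rfl).trans ⟨1, by simpa using gj'⟩)
      (chain 1 t h1 ?_)
    intro m hm hm'
    exact gP m (by omega) (by omega) (by omega) (by omega) (by omega)
  have SCkn : ∀ t : ℕ, k + 1 ≤ t → t < n → g.SameCycle a (P t) := by
    intro t h1 h2
    refine Equiv.Perm.SameCycle.trans ((SC1i i (by omega) le_rfl).trans ⟨1, by simpa using gi'⟩)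
      (chain (k + 1) t h1 ?_)
    intro m hm hm'
    exact gP m (by omega) (by omega) (by omega) (by omega) (by omega)
  have SCall : ∀ t : ℕ, t < n → g.SameCycle a (P t) := by
    intro t ht
    rcases Nat.eq_zero_or_pos t with rfl | h0
    · exact Equiv.Perm.SameCycle.refl g a
    rcases Nat.lt_or_ge t (i + 1) with h1 | h1
    · exact SC1i t h0 (by omega)
    rcases Nat.lt_or_ge t (j + 1) with h2 | h2
    · exact SCij t h1 (by omega)
    rcases Nat.lt_or_ge t (k + 1) with h3 | h3
    · exact SCjk t h2 (by omega)
    · exact SCkn t h3 ht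
  -- every element is some power of h applied to a
  have hall : ∀ x : Fin n, g.SameCycle a x := by
    intro x
    have hx : h x ≠ x := Equiv.Perm.mem_support.mp (hsupp ▸ Finset.mem_univ x)
    obtain ⟨z, hz, hz2⟩ := hcyc
    have hsc : h.SameCycle a x := (hz2 ha).symm.trans (hz2 hx)
    obtain ⟨t, ht, hteq⟩ := hsc.exists_pow_eq'
    rw [hord] at ht
    exact hteq ▸ SCall t ht
  have gA : g a ≠ a := by
    rw [g0]
    exact Pne (j + 1) 0 (by omega) (by omega) (by omega)
  have gfix : ∀ x : Fin n, g x ≠ x := by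
    intro x hfx
    obtain ⟨z, hz⟩ := (hall x).symm
    rw [zpow_apply_eq_self_of_apply_eq_self hfx z] at hz
    exact gA (hz ▸ hfx)
  constructor
  · exact ⟨a, gA, fun y _ => hall y⟩
  · exact Finset.eq_univ_iff_forall.mpr fun x => Equiv.Perm.mem_support.mpr (gfix x)
end

section
/- Let n be a natural number and let h₀ and h_C be two n-cycles in the symmetric group on Fin n. Then there exists a finite sequence s₁, s₂, …, s_r of permutations of Fin n, each of which is either a 3-cycle or a product of two disjoint transpositions, such that: (1) every partial product h₀ * s₁ * ⋯ * s_k (for 1 ≤ k ≤ r) is again an n-cycle; (2) at every step the number of points moved by (h₀ * s₁ * ⋯ * s_k)⁻¹ * h_C is at least two less than the number of points moved by (h₀ * s₁ * ⋯ * s_{k-1})⁻¹ * h_C; and (3) h₀ * s₁ * ⋯ * s_r = h_C. -/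
/-! Let `σ = h⁻¹ * hC ≠ 1` and `d = σ a ≠ a`. As `h` is an `n`-cycle, `g = h * swap a d`
has exactly two cycles, through `a` and through `d`: a single cycle would have the sign of
`h`. As `hC` is an `n`-cycle it cannot preserve both cycles of `g`, so some `u` lies in
another `g`-cycle than `hC u`, and with `v = g⁻¹ (hC u)` the product `g * swap u v` is again
an `n`-cycle. Its discrepancy with `hC` is `swap u (ρ u) * ρ` where `ρ = swap a (σ a) * σ`;
a factor `swap x (ρ x)` fixes `x` and moves no new point, so `a` and `u` leave the support. -/

open Finset

theorem exists_mul_prod_eq_of_step {M : Type*} [Monoid M] {P : M → Prop} {Step : M → M → Prop}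
    (μ : M → ℕ) {t : M} (hμ : ∀ x s, Step x s → μ (x * s) < μ x)
    (hstep : ∀ x, P x → x ≠ t → ∃ s, Step x s ∧ P (x * s)) {x : M} (hx : P x) :
    ∃ (r : ℕ) (s : ℕ → M), (∀ k < r, Step (x * ((List.range k).map s).prod) (s k) ∧
        P (x * ((List.range (k + 1)).map s).prod)) ∧
      x * ((List.range r).map s).prod = t := by
  induction hμx : μ x using Nat.strong_induction_on generalizing x with
  | _ m ih =>
    by_cases hxt : x = t
    · exact ⟨0, fun _ => 1, by simp, by simpa using hxt⟩
    obtain ⟨s₀, hgood, hPs₀⟩ := hstep x hx hxt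
    obtain ⟨r, s, hs, hend⟩ := ih _ (hμx ▸ hμ x s₀ hgood) hPs₀ rfl
    have hprod : ∀ k, ((List.range (k + 1)).map (fun | 0 => s₀ | i + 1 => s i)).prod
        = s₀ * ((List.range k).map s).prod := fun k => List.prod_range_succ' _ k
    refine ⟨r + 1, fun | 0 => s₀ | i + 1 => s i, fun k hk => ?_,
      by rw [hprod, ← mul_assoc, hend]⟩
    rcases k with _ | j
    · simpa using ⟨hgood, hPs₀⟩
    · rw [hprod, hprod, ← mul_assoc, ← mul_assoc]
      exact hs j (by omega)

namespace Equiv.Perm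

variable {α : Type*} {f g : Perm α} {a d u v x : α}

theorem sameCycle_or_sameCycle_of_not_sameCycle (H : ∀ x, g.SameCycle a x ∨ g.SameCycle d x)
    (huv : ¬ g.SameCycle u v) (x : α) : g.SameCycle u x ∨ g.SameCycle v x := by
  rcases H u with hu | hu <;> rcases H v with hv | hv <;> rcases H x with hx | hx <;>
    first
    | exact absurd (hu.symm.trans hv) huv
    | exact Or.inl (hu.symm.trans hx)
    | exact Or.inr (hv.symm.trans hx)

section Finite

variable [Finite α]

theorem SameCycle.of_invariant {p : α → Prop} (hp : ∀ y, p y → p (f y)) (ha : p a)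
    (h : f.SameCycle a x) : p x := by
  obtain ⟨i, rfl⟩ := h.exists_nat_pow_eq
  clear h
  induction i with
  | zero => exact ha
  | succ i ih => rw [pow_succ', mul_apply]; exact hp _ ih

theorem exists_not_sameCycle_apply {h : Perm α} (hh : ∀ x y, h.SameCycle x y)
    (had : ¬ g.SameCycle a d) : ∃ u, ¬ g.SameCycle u (h u) := by
  by_contra! hall
  exact had ((hh a d).of_invariant (fun y hy => hy.trans (hall y)) (SameCycle.refl _ _))

variable [DecidableEq α]

theorem sameCycle_mul_swap_or (h : f.SameCycle a x) :
    (f * swap a d).SameCycle a x ∨ (f * swap a d).SameCycle d x := by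
  refine h.of_invariant
    (p := fun y => (f * swap a d).SameCycle a y ∨ (f * swap a d).SameCycle d y)
    (fun y hy => ?_) (Or.inl (SameCycle.refl _ _))
  have hfy : f y = (f * swap a d) (swap a d y) := by simp
  rw [hfy, sameCycle_apply_right, sameCycle_apply_right]
  rcases eq_or_ne y a with rfl | hya
  · simp [SameCycle.refl]
  rcases eq_or_ne y d with rfl | hyd
  · simp [SameCycle.refl]
  rwa [swap_apply_of_ne_of_ne hya hyd]

theorem sameCycle_mul_swap_of_not_sameCycle (h : ¬ f.SameCycle a d) :
    (f * swap a d).SameCycle a d := by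
  set g := f * swap a d
  -- Walk from `f a = g d` along the `f`-cycle of `a`, where `g` agrees with `f` until `a`.
  have walk : ∀ y, f.SameCycle (f a) y →
      g.SameCycle d a ∨ (g.SameCycle d y ∧ f.SameCycle a y) := by
    refine fun y hy => hy.of_invariant
      (p := fun y => g.SameCycle d a ∨ (g.SameCycle d y ∧ f.SameCycle a y)) (fun y hy => ?_)
      (Or.inr ⟨⟨1, by simp [g]⟩, ⟨1, by simp⟩⟩)
    rcases hy with hy | ⟨hdy, hay⟩
    · exact Or.inl hy
    rcases eq_or_ne y a with rfl | hya
    · exact Or.inl hdy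
    have hyd : y ≠ d := fun e => h (e ▸ hay)
    have hgy : g y = f y := by simp [g, swap_apply_of_ne_of_ne hya hyd]
    exact Or.inr ⟨hgy ▸ sameCycle_apply_right.2 hdy, sameCycle_apply_right.2 hay⟩
  obtain hda | ⟨hda, -⟩ := walk a (sameCycle_apply_left.2 (SameCycle.refl _ _)) <;>
    exact hda.symm

theorem sameCycle_mul_swap_of_sameCycle_or (h : ¬ f.SameCycle a d)
    (hx : f.SameCycle a x ∨ f.SameCycle d x) : (f * swap a d).SameCycle a x := by
  have had := sameCycle_mul_swap_of_not_sameCycle h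
  rcases hx with hx | hx
  · exact (sameCycle_mul_swap_or hx).elim id had.trans
  · have := sameCycle_mul_swap_or (d := a) hx
    rw [swap_comm] at this
    exact this.elim had.trans id

end Finite

variable [Fintype α] [DecidableEq α]

def IsFullCycle (f : Perm α) : Prop := f.IsCycle ∧ f.support = univ

theorem IsFullCycle.sameCycle (hf : f.IsFullCycle) (x y : α) : f.SameCycle x y :=
  hf.1.sameCycle (mem_support.1 (hf.2 ▸ mem_univ x))
    (mem_support.1 (hf.2 ▸ mem_univ y))

theorem IsFullCycle.sign (hf : f.IsFullCycle) : sign f = -(-1) ^ Fintype.card α := by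
  rw [hf.1.sign, hf.2, card_univ]

theorem isFullCycle_of_forall_sameCycle [Nontrivial α] (hf : ∀ x, f.SameCycle a x) :
    f.IsFullCycle := by
  have hmove : ∀ x, f x ≠ x := by
    intro x hx
    have hxy : ∀ y, x = y := fun y => ((hf x).symm.trans (hf y)).eq_of_left hx
    obtain ⟨b, c, hbc⟩ := exists_pair_ne α
    exact hbc ((hxy b).symm.trans (hxy c))
  exact ⟨⟨a, hmove a, fun y _ => hf y⟩, eq_univ_of_forall fun x => mem_support.2 (hmove x)⟩

theorem IsFullCycle.not_sameCycle_mul_swap (hf : f.IsFullCycle) (had : a ≠ d) :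
    ¬ (f * swap a d).SameCycle a d := by
  intro hsc
  have : Nontrivial α := ⟨⟨a, d, had⟩⟩
  have hg : (f * swap a d).IsFullCycle := isFullCycle_of_forall_sameCycle fun x =>
    (sameCycle_mul_swap_or (hf.sameCycle a x)).elim id hsc.trans
  have hsign := hg.sign
  rw [sign_mul, sign_swap had, hf.sign, mul_neg_one] at hsign
  exact units_ne_neg_self _ hsign.symm

def IsThreeCycleOrDoubleSwap (s : Perm α) : Prop :=
  s.IsThreeCycle ∨ ∃ a b c d : α, a ≠ b ∧ c ≠ d ∧ a ≠ c ∧ a ≠ d ∧ b ≠ c ∧ b ≠ d ∧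
    s = swap a b * swap c d

theorem isThreeCycleOrDoubleSwap_swap_mul_swap (had : a ≠ d) (huv : u ≠ v) (hau : a ≠ u)
    (hav : a ≠ v) : IsThreeCycleOrDoubleSwap (swap a d * swap u v) := by
  rcases eq_or_ne d u with rfl | hdu
  · left
    rw [swap_comm a]
    exact isThreeCycle_swap_mul_swap_same had.symm huv hav
  rcases eq_or_ne d v with rfl | hdv
  · left
    rw [swap_comm a, swap_comm u]
    exact isThreeCycle_swap_mul_swap_same had.symm huv.symm hau
  exact Or.inr ⟨a, d, u, v, had, huv, hau, hav, hdu, hdv, rfl⟩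

theorem IsFullCycle.exists_step {h hC : Perm α} (hh : h.IsFullCycle)
    (hC_trans : ∀ x y, hC.SameCycle x y) (hne : h ≠ hC) :
    ∃ s, (IsThreeCycleOrDoubleSwap s ∧
      #((h * s)⁻¹ * hC).support + 2 ≤ #(h⁻¹ * hC).support) ∧ (h * s).IsFullCycle := by
  set σ := h⁻¹ * hC
  obtain ⟨a, ha⟩ : ∃ a, σ a ≠ a := by
    by_contra! hfix
    exact hne (inv_mul_eq_one.1 (Equiv.ext hfix))
  set d := σ a
  set g := h * swap a d
  set ρ := swap a d * σ
  have hρ : ∀ x, ρ x = g⁻¹ (hC x) := fun x => by simp [ρ, g, σ, mul_apply]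
  have hρa : ρ a = a := by simp [ρ, d]
  have had : a ≠ d := ha.symm
  have hsplit : ¬ g.SameCycle a d := hh.not_sameCycle_mul_swap had
  obtain ⟨u, hu⟩ := exists_not_sameCycle_apply hC_trans hsplit
  set v := ρ u
  have huv : ¬ g.SameCycle u v := by
    rwa [show v = g⁻¹ (hC u) from hρ u, inv_def, sameCycle_symm_apply_right]
  have hne_uv : u ≠ v := fun e => huv (e ▸ SameCycle.refl _ _)
  have hau : a ≠ u := fun e => hne_uv (e ▸ hρa.symm : u = ρ u)
  have hav : a ≠ v := fun e => hau (ρ.injective (hρa.trans e))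
  have : Nontrivial α := ⟨⟨a, d, had⟩⟩
  have hcover : ∀ x, g.SameCycle a x ∨ g.SameCycle d x :=
    fun x => sameCycle_mul_swap_or (hh.sameCycle a x)
  refine ⟨swap a d * swap u v,
    ⟨isThreeCycleOrDoubleSwap_swap_mul_swap had hne_uv hau hav, ?_⟩, ?_⟩
  · have hdisc : (h * (swap a d * swap u v))⁻¹ * hC = swap u (ρ u) * ρ := by
      simp only [v, ρ, σ, mul_inv_rev, swap_inv, mul_assoc]
    rw [hdisc]
    have h₁ := card_support_swap_mul hne_uv.symm
    have h₂ : #ρ.support < #σ.support := card_support_swap_mul ha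
    omega
  · rw [← mul_assoc]
    exact isFullCycle_of_forall_sameCycle fun x => sameCycle_mul_swap_of_sameCycle_or huv
      (sameCycle_or_sameCycle_of_not_sameCycle hcover huv x)

end Equiv.Perm

/-- Theorem 1.10 (group-theoretic content): given two `n`-cycles `h₀` and `hC`
on `Fin n`, there is a finite sequence `s 0, …, s (r-1)` of permutations, each a
3-cycle or a product of two disjoint transpositions, such that every partial
product `h₀ * s 0 * ⋯ * s (k-1)` is again an `n`-cycle, at each step the number
of points moved by `(partial product)⁻¹ * hC` drops by at least two, and the
full product equals `hC`. -/
theorem stmt_5 (n : ℕ) (h₀ hC : Equiv.Perm (Fin n))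
    (h₀cyc : h₀.IsCycle) (h₀supp : h₀.support = Finset.univ)
    (hCcyc : hC.IsCycle) (hCsupp : hC.support = Finset.univ) :
    ∃ (r : ℕ) (s : ℕ → Equiv.Perm (Fin n)),
      (∀ k < r, (s k).IsThreeCycle ∨
        ∃ a b c d : Fin n, a ≠ b ∧ c ≠ d ∧ a ≠ c ∧ a ≠ d ∧ b ≠ c ∧ b ≠ d ∧
          s k = Equiv.swap a b * Equiv.swap c d) ∧
      (∀ k, 1 ≤ k → k ≤ r →
        (h₀ * ((List.range k).map s).prod).IsCycle ∧
          (h₀ * ((List.range k).map s).prod).support = Finset.univ) ∧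
      (∀ k, 1 ≤ k → k ≤ r →
        ((h₀ * ((List.range k).map s).prod)⁻¹ * hC).support.card + 2 ≤
          ((h₀ * ((List.range (k - 1)).map s).prod)⁻¹ * hC).support.card) ∧
      h₀ * ((List.range r).map s).prod = hC := by
  have hC_trans := Equiv.Perm.IsFullCycle.sameCycle ⟨hCcyc, hCsupp⟩
  obtain ⟨r, s, hs, hend⟩ := exists_mul_prod_eq_of_step (P := Equiv.Perm.IsFullCycle)
    (Step := fun h s => Equiv.Perm.IsThreeCycleOrDoubleSwap s ∧
      #((h * s)⁻¹ * hC).support + 2 ≤ #(h⁻¹ * hC).support)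
    (fun h => #(h⁻¹ * hC).support) (fun _ _ hstep => by omega)
    (fun _ hh hne => hh.exists_step hC_trans hne) ⟨h₀cyc, h₀supp⟩
  refine ⟨r, s, fun k hk => (hs k hk).1.1, fun k hk1 hkr => ?_, fun k hk1 hkr => ?_, hend⟩ <;>
    obtain ⟨j, rfl⟩ := Nat.exists_eq_add_of_le' hk1
  · exact (hs j hkr).2
  · simpa [List.prod_range_succ, mul_assoc] using (hs j hkr).1.2
end

section
/- Define D(x) = 360x⁶ − 5040x⁵ + 29160x⁴ − 89280x³ + 152640x² − 138240x + 51840 and N(x) = 286x⁶ − 4326x⁵ + 23489x⁴ − 80546x³ + 190342x² − 112242x + 27624. Then for every real number x with x ≥ 30, one has D(x) > 0 and N(x)/D(x) > 0.7135599. -/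
/-- For `x ≥ 30`, the denominator `D(x)` of the probability `p(x)` of
Theorem 1.6 is positive and `N(x)/D(x) > 0.7135599` (used in Theorem 1.14). -/
theorem stmt_10 (x : ℝ) (hx : 30 ≤ x) :
    0 < (360 * x ^ 6 - 5040 * x ^ 5 + 29160 * x ^ 4 - 89280 * x ^ 3 +
          152640 * x ^ 2 - 138240 * x + 51840) ∧
      0.7135599 <
        (286 * x ^ 6 - 4326 * x ^ 5 + 23489 * x ^ 4 - 80546 * x ^ 3 +
            190342 * x ^ 2 - 112242 * x + 27624) /
          (360 * x ^ 6 - 5040 * x ^ 5 + 29160 * x ^ 4 - 89280 * x ^ 3 +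
            152640 * x ^ 2 - 138240 * x + 51840) := by
  have ht : 0 ≤ x - 30 := by linarith
  have hD : 0 < (360 * x ^ 6 - 5040 * x ^ 5 + 29160 * x ^ 4 - 89280 * x ^ 3 +
      152640 * x ^ 2 - 138240 * x + 51840) := by
    nlinarith [pow_nonneg ht 6, pow_nonneg ht 5, pow_nonneg ht 4, pow_nonneg ht 3,
      pow_nonneg ht 2, ht]
  refine ⟨hD, ?_⟩
  rw [lt_div_iff₀ hD]
  nlinarith [pow_nonneg ht 6, pow_nonneg ht 5, pow_nonneg ht 4, pow_nonneg ht 3,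
      pow_nonneg ht 2, ht]
end

section
/- Let n, v, r be natural numbers with 1 ≤ v < n and r ≥ 1, and set v!·S_v = n·(n−1)·⋯·(n−v+1) · (1 − v/n)^r (i.e., the descending factorial (n)_v times (1 − v/n)^r, where S_v = C(n, v)·(1 − v/n)^r). Then the double inequality n^v · exp(−v·(v + r)/(n − v)) < v!·S_v < n^v · exp(−r·v/n) holds in the real numbers. -/
/-! Write `t = v / n`. Since `(n - v)^v < (n)_v ≤ n^v` and `n (1 - t) = n - v`, it suffices to
compare `1 - t` with exponentials: `1 - t < exp (-t)` gives the upper bound after raising to the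
power `r`, and `exp (-t / (1 - t)) < 1 - t`, raised to the power `v + r`, gives the lower bound
because `t / (1 - t) = v / (n - v)`. -/

namespace Nat

theorem sub_pow_lt_descFactorial {n v : ℕ} (hv : 0 < v) (hvn : v ≤ n) :
    (n - v) ^ v < n.descFactorial v :=
  calc (n - v) ^ v < (n + 1 - v) ^ v := Nat.pow_lt_pow_left (by omega) hv.ne'
    _ ≤ n.descFactorial v := pow_sub_le_descFactorial n v

end Nat

namespace Real

theorem exp_neg_div_one_sub_lt_one_sub {t : ℝ} (ht₀ : 0 < t) (ht₁ : t < 1) :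
    exp (-(t / (1 - t))) < 1 - t := by
  have hpos : 0 < 1 - t := by linarith
  have h : 1 / (1 - t) < exp (t / (1 - t)) := by
    calc 1 / (1 - t) = t / (1 - t) + 1 := by field_simp; ring
      _ < exp (t / (1 - t)) := add_one_lt_exp (by positivity)
  rw [exp_neg, inv_lt_comm₀ (exp_pos _) hpos, ← one_div]
  exact h

end Real

open Real

section OccupancyBounds

variable {n v : ℕ}

theorem descFactorial_mul_one_sub_pow_lt (hv : 0 < v) (hvn : v ≤ n) {r : ℕ} (hr : r ≠ 0) :
    (n.descFactorial v : ℝ) * (1 - (v : ℝ) / n) ^ r < (n : ℝ) ^ v * exp (-((r : ℝ) * v) / n) := by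
  have hn : (0 : ℝ) < n := by exact_mod_cast hv.trans_le hvn
  have ht : (0 : ℝ) ≤ 1 - (v : ℝ) / n := by
    rw [sub_nonneg, div_le_one hn]; exact_mod_cast hvn
  have hexp : exp (-((r : ℝ) * v) / n) = exp (-((v : ℝ) / n)) ^ r := by
    rw [← exp_nat_mul]; congr 1; ring
  calc (n.descFactorial v : ℝ) * (1 - (v : ℝ) / n) ^ r
      ≤ (n : ℝ) ^ v * (1 - (v : ℝ) / n) ^ r := by
        gcongr; exact_mod_cast Nat.descFactorial_le_pow n v
    _ < (n : ℝ) ^ v * exp (-((r : ℝ) * v) / n) := by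
        rw [hexp]
        gcongr
        exact one_sub_lt_exp_neg (by positivity)

theorem lt_descFactorial_mul_one_sub_pow (hv : 0 < v) (hvn : v < n) (r : ℕ) :
    (n : ℝ) ^ v * exp (-((v : ℝ) * (v + r)) / (n - v)) <
      (n.descFactorial v : ℝ) * (1 - (v : ℝ) / n) ^ r := by
  have hn : (0 : ℝ) < n := by exact_mod_cast hv.trans hvn
  have hvn' : (v : ℝ) < n := by exact_mod_cast hvn
  have ht₀ : (0 : ℝ) < v / n := by positivity
  have ht₁ : (v : ℝ) / n < 1 := (div_lt_one hn).2 hvn'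
  have hnt : (n : ℝ) * (1 - v / n) = n - v := by field_simp
  have hexp : exp (-((v : ℝ) * (v + r)) / (n - v)) =
      exp (-((v : ℝ) / n / (1 - v / n))) ^ (v + r) := by
    rw [← exp_nat_mul]
    congr 1
    field_simp
    push_cast
    ring
  have hdesc : ((n : ℝ) - v) ^ v < n.descFactorial v := by
    rw [← Nat.cast_sub hvn.le]
    exact_mod_cast Nat.sub_pow_lt_descFactorial hv hvn.le
  calc (n : ℝ) ^ v * exp (-((v : ℝ) * (v + r)) / (n - v))
      < (n : ℝ) ^ v * (1 - (v : ℝ) / n) ^ (v + r) := by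
        rw [hexp]
        gcongr
        exact exp_neg_div_one_sub_lt_one_sub ht₀ ht₁
    _ = ((n : ℝ) - v) ^ v * (1 - (v : ℝ) / n) ^ r := by rw [← hnt, pow_add, mul_pow, mul_assoc]
    _ < (n.descFactorial v : ℝ) * (1 - (v : ℝ) / n) ^ r := by gcongr

end OccupancyBounds

/-- The double inequality of Section 1.4: for `1 ≤ v < n` and `r ≥ 1`, with
`v!·S_v = (n)_v · (1 − v/n)^r` (descending factorial times `(1 − v/n)^r`),
`n^v · exp(−v(v + r)/(n − v)) < v!·S_v < n^v · exp(−r·v/n)`. -/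
theorem stmt_15 (n v r : ℕ) (hv : 1 ≤ v) (hvn : v < n) (hr : 1 ≤ r) :
    (n : ℝ) ^ v * Real.exp (-((v : ℝ) * ((v : ℝ) + (r : ℝ))) / ((n : ℝ) - (v : ℝ))) <
        (Nat.descFactorial n v : ℝ) * (1 - (v : ℝ) / (n : ℝ)) ^ r ∧
      (Nat.descFactorial n v : ℝ) * (1 - (v : ℝ) / (n : ℝ)) ^ r <
        (n : ℝ) ^ v * Real.exp (-((r : ℝ) * (v : ℝ)) / (n : ℝ)) :=
  ⟨lt_descFactorial_mul_one_sub_pow hv hvn r,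
    descFactorial_mul_one_sub_pow_lt hv hvn.le (by omega)⟩
end

section
/- Fix a natural number v and a real number λ ≥ 0, and let r : ℕ → ℕ be a sequence such that n · exp(−(r n)/n) tends to λ as n → ∞. Then the sequence S_v(n) = C(n, v) · (1 − v/n)^{r n} tends to λ^v / v! as n → ∞. -/
/-! With `a = n·exp(−r/n)`, the bounds `(n − v)^v ≤ v!·C(n, v) ≤ n^v` and
`exp(−x/(1 − x)) ≤ 1 − x ≤ exp(−x)` give the sandwich
`n^v·exp(−v(v + r)/(n − v)) ≤ v!·S_v(n) ≤ a^v`.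
The lower side equals `a^v·exp(−δ)` with `δ = v²(n + r)/(n(n − v))`, so the two sides differ
by at most `a^v·δ`. Up to a factor tending to `v²·λ^(v−1)`, this is `u − u·log u` with
`u = exp(−r/n) = a/n → 0`, hence it tends to `0`. -/

open Filter Real Topology
open scoped Nat

noncomputable def occupancyTerm (v n r : ℕ) : ℝ := (n.choose v : ℝ) * (1 - (v : ℝ) / n) ^ r

lemma exp_neg_div_sub_le_one_sub_div {v n : ℝ} (hn : 0 < n) (hvn : v < n) :
    exp (-(v / (n - v))) ≤ 1 - v / n := by
  have hnv : 0 < n - v := sub_pos.2 hvn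
  have key : n / (n - v) ≤ exp (v / (n - v)) := by
    calc n / (n - v) = v / (n - v) + 1 := by field_simp; ring
      _ ≤ exp (v / (n - v)) := add_one_le_exp _
  rw [exp_neg, inv_le_comm₀ (exp_pos _) (by rw [sub_pos, div_lt_one hn]; exact hvn)]
  calc (1 - v / n)⁻¹ = n / (n - v) := by field_simp
    _ ≤ _ := key

lemma factorial_mul_occupancyTerm_le {v n : ℕ} (r : ℕ) (hvn : v ≤ n) :
    v ! * occupancyTerm v n r ≤ (n * exp (-(r : ℝ) / n)) ^ v := by
  have hx : 0 ≤ 1 - (v : ℝ) / n :=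
    sub_nonneg.2 (div_le_one_of_le₀ (by exact_mod_cast hvn) n.cast_nonneg)
  calc (v ! : ℝ) * occupancyTerm v n r = n.descFactorial v * (1 - (v : ℝ) / n) ^ r := by
        rw [occupancyTerm, Nat.descFactorial_eq_factorial_mul_choose]; push_cast; ring
    _ ≤ n ^ v * exp (-((v : ℝ) / n)) ^ r := by
        gcongr
        · exact_mod_cast Nat.descFactorial_le_pow n v
        · exact one_sub_le_exp_neg _
    _ = (n * exp (-(r : ℝ) / n)) ^ v := by
        rw [mul_pow, ← exp_nat_mul, ← exp_nat_mul]; ring_nf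

lemma pow_mul_exp_le_factorial_mul_occupancyTerm {v n : ℕ} (r : ℕ) (hvn : v < n) :
    (n : ℝ) ^ v * exp (-(v * (v + r) / (n - v))) ≤ v ! * occupancyTerm v n r := by
  have hvn' : (v : ℝ) < n := by exact_mod_cast hvn
  have hn : (0 : ℝ) < n := by exact_mod_cast (Nat.zero_le v).trans_lt hvn
  calc (n : ℝ) ^ v * exp (-(v * (v + r) / (n - v)))
      = n ^ v * exp (-(v / (n - v))) ^ (v + r) := by
        rw [← exp_nat_mul]; push_cast; ring_nf
    _ ≤ n ^ v * (1 - v / n) ^ (v + r) := by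
        gcongr; exact exp_neg_div_sub_le_one_sub_div hn hvn'
    _ = ((n - v : ℕ) : ℝ) ^ v * (1 - v / n) ^ r := by
        rw [Nat.cast_sub hvn.le, pow_add, ← mul_assoc, ← mul_pow, mul_one_sub,
          mul_div_cancel₀ _ hn.ne']
    _ ≤ n.descFactorial v * (1 - v / n) ^ r := by
        gcongr
        · exact pow_nonneg (sub_nonneg.2 (div_le_one_of_le₀ hvn'.le hn.le)) r
        · exact_mod_cast
            (Nat.pow_le_pow_left (by omega) v).trans (Nat.pow_sub_le_descFactorial n v)
    _ = v ! * occupancyTerm v n r := by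
        rw [occupancyTerm, Nat.descFactorial_eq_factorial_mul_choose]; push_cast; ring

lemma pow_mul_exp_eq {v n : ℕ} (r : ℕ) (hvn : v < n) :
    (n : ℝ) ^ v * exp (-(v * (v + r) / (n - v))) =
      (n * exp (-(r : ℝ) / n)) ^ v * exp (-(v ^ 2 * (n + r) / (n * (n - v)))) := by
  have hnv : (n : ℝ) - v ≠ 0 := sub_ne_zero.2 (by exact_mod_cast hvn.ne')
  have hn : (n : ℝ) ≠ 0 := by exact_mod_cast ((Nat.zero_le v).trans_lt hvn).ne'
  rw [mul_pow, ← exp_nat_mul, mul_assoc, ← exp_add]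
  congr 2
  field_simp
  ring

lemma tendsto_pow_mul_sandwichGap {v : ℕ} {lam : ℝ} {r : ℕ → ℝ}
    (hr : Tendsto (fun n : ℕ => n * exp (-r n / n)) atTop (𝓝 lam)) :
    Tendsto (fun n : ℕ => (n * exp (-r n / n)) ^ v * (v ^ 2 * (n + r n) / (n * (n - v))))
      atTop (𝓝 0) := by
  rcases v with _ | k
  · simp
  set u : ℕ → ℝ := fun n => exp (-r n / n)
  have hu : Tendsto u atTop (𝓝 0) := by
    exact (hr.div_atTop tendsto_natCast_atTop_atTop).congr' <|
      (eventually_ne_atTop 0).mono fun n hn => mul_div_cancel_left₀ _ (Nat.cast_ne_zero.2 hn)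
  have hlog : Tendsto (fun n => u n + negMulLog (u n)) atTop (𝓝 0) := by
    simpa using hu.add ((continuous_negMulLog.tendsto 0).comp hu)
  have hratio : Tendsto (fun n : ℕ => (n : ℝ) / (n - (k + 1 : ℕ))) atTop (𝓝 1) := by
    simpa [sub_eq_add_neg] using tendsto_natCast_div_add_atTop (-((k + 1 : ℕ) : ℝ))
  have hprod := ((hratio.const_mul (((k + 1 : ℕ) : ℝ) ^ 2)).mul (hr.pow k)).mul hlog
  rw [mul_zero] at hprod
  refine hprod.congr' ((eventually_gt_atTop (k + 1)).mono fun n hn => ?_)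
  have hnv : (n : ℝ) - (k + 1 : ℕ) ≠ 0 := sub_ne_zero.2 (by exact_mod_cast hn.ne')
  have hn : (n : ℝ) ≠ 0 := by exact_mod_cast (Nat.zero_lt_of_lt hn).ne'
  simp only [u, negMulLog, log_exp]
  field_simp
  ring

theorem stmt_16_general (v : ℕ) (lam : ℝ) (r : ℕ → ℕ)
    (hr : Filter.Tendsto (fun n : ℕ => (n : ℝ) * Real.exp (-(r n : ℝ) / (n : ℝ)))
      Filter.atTop (nhds lam)) :
    Filter.Tendsto
      (fun n : ℕ => (n.choose v : ℝ) * (1 - (v : ℝ) / (n : ℝ)) ^ (r n))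
      Filter.atTop (nhds (lam ^ v / (Nat.factorial v : ℝ))) := by
  set a : ℕ → ℝ := fun n => n * exp (-(r n : ℝ) / n)
  set δ : ℕ → ℝ := fun n => v ^ 2 * (n + r n) / (n * (n - v))
  have hlower : Tendsto (fun n => a n ^ v * (1 - δ n)) atTop (𝓝 (lam ^ v)) := by
    simpa only [sub_zero, mul_one_sub] using
      (hr.pow v).sub (tendsto_pow_mul_sandwichGap (v := v) (r := fun n => r n) hr)
  have hbounds : ∀ᶠ n in atTop,
      a n ^ v * (1 - δ n) ≤ v ! * occupancyTerm v n (r n) ∧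
        v ! * occupancyTerm v n (r n) ≤ a n ^ v := by
    filter_upwards [eventually_gt_atTop v] with n hvn
    refine ⟨?_, factorial_mul_occupancyTerm_le (r n) hvn.le⟩
    calc a n ^ v * (1 - δ n) ≤ a n ^ v * exp (-δ n) := by
          gcongr
          exact one_sub_le_exp_neg _
      _ = n ^ v * exp (-(v * (v + r n) / (n - v))) := (pow_mul_exp_eq (r n) hvn).symm
      _ ≤ v ! * occupancyTerm v n (r n) := pow_mul_exp_le_factorial_mul_occupancyTerm (r n) hvn
  have hlim := (tendsto_of_tendsto_of_tendsto_of_le_of_le' hlower (hr.pow v)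
    (hbounds.mono fun _ h => h.1) (hbounds.mono fun _ h => h.2)).div_const (v ! : ℝ)
  refine hlim.congr fun n => ?_
  simp only [occupancyTerm]
  field_simp

/-- Section 1.4: fix `v : ℕ` and `λ ≥ 0`, and let `r : ℕ → ℕ` satisfy
`n · exp(−r(n)/n) → λ` as `n → ∞`.  Then the occupancy term
`S_v(n) = C(n, v) · (1 − v/n)^{r(n)}` tends to `λ^v / v!`. -/
theorem stmt_16 (v : ℕ) (lam : ℝ) (hlam : 0 ≤ lam) (r : ℕ → ℕ)
    (hr : Filter.Tendsto (fun n : ℕ => (n : ℝ) * Real.exp (-(r n : ℝ) / (n : ℝ)))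
      Filter.atTop (nhds lam)) :
    Filter.Tendsto
      (fun n : ℕ => (n.choose v : ℝ) * (1 - (v : ℝ) / (n : ℝ)) ^ (r n))
      Filter.atTop (nhds (lam ^ v / (Nat.factorial v : ℝ))) :=
  stmt_16_general v lam r hr
end
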